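/- The conformable derivative is local: if f and g are differentiable and agree on a neighborhood of t > 0, then T_α f(t) = T_α g(t); by contrast, there exist differentiable f, g on [0,∞) agreeing near t but with different Caputo derivatives at t. -/

import Mathlib

/-!
The conformable derivative `t ^ (1 - α) * f' t` sees `f'` only at `t`, so it is local. The Caputo
derivative integrates `f'` against the kernel `(t - x) ^ (-α)` over all of `[0, t]`. Let `f` be a
primitive of a continuous `φ` that is positive on `(0, s)` and vanishes from `s < t` on. Then `f`
is constant near `t`, yet its Caputo derivative at `t` is
`Γ(1 - α)⁻¹ ∫₀ˢ φ(x) (t - x) ^ (-α) dx > 0`, whereas that of the constant is `0`.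
-/

open Real Filter MeasureTheory Set intervalIntegral Topology

noncomputable section

def conformableDeriv (α : ℝ) (f : ℝ → ℝ) (t : ℝ) : ℝ :=
  t ^ (1 - α) * deriv f t

def caputoDeriv (α : ℝ) (f : ℝ → ℝ) (t : ℝ) : ℝ :=
  1 / Gamma (1 - α) * ∫ x in (0 : ℝ)..t, deriv f x * (t - x) ^ (-α)

theorem Filter.EventuallyEq.conformableDeriv_eq {α t : ℝ} {f g : ℝ → ℝ} (h : f =ᶠ[𝓝 t] g) :
    conformableDeriv α f t = conformableDeriv α g t := by
  rw [conformableDeriv, conformableDeriv, h.deriv_eq]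

theorem caputoDeriv_const (α t c : ℝ) : caputoDeriv α (fun _ => c) t = 0 := by
  simp [caputoDeriv]

theorem caputoDeriv_integral {φ : ℝ → ℝ} (hφ : Continuous φ) (α a t : ℝ) :
    caputoDeriv α (fun x => ∫ y in a..x, φ y) t =
      1 / Gamma (1 - α) * ∫ x in (0 : ℝ)..t, φ x * (t - x) ^ (-α) := by
  simp only [caputoDeriv, hφ.deriv_integral]

variable {E : Type*} [NormedAddCommGroup E] [NormedSpace ℝ E]

theorem intervalIntegral.integral_eq_of_eqOn_zero {f : ℝ → E} {a b c : ℝ}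
    (hf : IntervalIntegrable f volume a b) (hbc : b ≤ c) (h : EqOn f 0 (Icc b c)) :
    ∫ x in a..c, f x = ∫ x in a..b, f x := by
  have h' : EqOn f 0 (uIcc b c) := by rwa [uIcc_of_le hbc]
  have hbc_int : IntervalIntegrable f volume b c :=
    (intervalIntegrable_congr (h'.mono uIoc_subset_uIcc)).mpr intervalIntegrable_const
  rw [← integral_add_adjacent_intervals hf hbc_int, integral_congr h']
  simp

theorem eventuallyEq_integral_of_eqOn_Ici {φ : ℝ → E} (hφ : Continuous φ) {a s t : ℝ}
    (hst : s < t) (h : EqOn φ 0 (Ici s)) :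
    (fun x => ∫ y in a..x, φ y) =ᶠ[𝓝 t] fun _ => ∫ y in a..s, φ y := by
  filter_upwards [Ioi_mem_nhds hst] with x hx
  exact integral_eq_of_eqOn_zero (hφ.intervalIntegrable a s) hx.le (h.mono Icc_subset_Ici_self)

theorem integral_mul_rpow_sub_pos {φ : ℝ → ℝ} (hφ : Continuous φ) {s t : ℝ} (hs : 0 < s)
    (hst : s < t) (hpos : ∀ x ∈ Ioo 0 s, 0 < φ x) (hzero : EqOn φ 0 (Ici s)) (α : ℝ) :
    0 < ∫ x in (0 : ℝ)..t, φ x * (t - x) ^ (-α) := by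
  have hcont : ContinuousOn (fun x => φ x * (t - x) ^ (-α)) (Icc 0 s) :=
    hφ.continuousOn.mul <| ContinuousOn.rpow_const (by fun_prop)
      fun x hx => Or.inl (by linarith [hx.2])
  have hint : IntervalIntegrable _ volume 0 s := hcont.intervalIntegrable_of_Icc hs.le
  rw [integral_eq_of_eqOn_zero hint hst.le fun x hx => by simp [hzero hx.1]]
  exact intervalIntegral_pos_of_pos_on hint
    (fun x hx => mul_pos (hpos x hx) (rpow_pos_of_pos (by linarith [hx.2]) _)) hs

theorem exists_continuous_pos_on_Ioo_eqOn_zero (a b : ℝ) :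
    ∃ φ : ℝ → ℝ, Continuous φ ∧ (∀ x ∈ Ioo a b, 0 < φ x) ∧ EqOn φ 0 (Ioo a b)ᶜ := by
  refine ⟨fun x => max (min (x - a) (b - x)) 0, by fun_prop,
    fun x hx => lt_max_of_lt_left (lt_min (by linarith [hx.1]) (by linarith [hx.2])), ?_⟩
  intro x hx
  rw [mem_compl_iff, mem_Ioo, not_and_or, not_lt, not_lt] at hx
  refine max_eq_right ?_
  rcases hx with hx | hx
  · exact min_le_of_left_le (by linarith)
  · exact min_le_of_right_le (by linarith)

theorem exists_eventuallyEq_caputoDeriv_ne {α t : ℝ} (hα : α < 1) (ht : 0 < t) :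
    ∃ f g : ℝ → ℝ, Differentiable ℝ f ∧ Differentiable ℝ g ∧ f =ᶠ[𝓝 t] g ∧
      caputoDeriv α f t ≠ caputoDeriv α g t := by
  obtain ⟨φ, hφ, hpos, hzero⟩ := exists_continuous_pos_on_Ioo_eqOn_zero 0 (t / 2)
  have hzero' : EqOn φ 0 (Ici (t / 2)) :=
    hzero.mono fun x (hx : t / 2 ≤ x) (hmem : x ∈ Ioo 0 (t / 2)) => hmem.2.not_ge hx
  refine ⟨fun x => ∫ y in 0..x, φ y, fun _ => ∫ y in 0..t / 2, φ y,
    fun x => (hφ.integral_hasStrictDerivAt 0 x).hasDerivAt.differentiableAt, differentiable_const _,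
    eventuallyEq_integral_of_eqOn_Ici hφ (by linarith) hzero', ?_⟩
  rw [caputoDeriv_integral hφ, caputoDeriv_const]
  exact (mul_pos (one_div_pos.2 (Gamma_pos_of_pos (by linarith)))
    (integral_mul_rpow_sub_pos hφ (by linarith) (by linarith) hpos hzero' α)).ne'

end

theorem conformable_local_caputo_nonlocal_general (α t : ℝ) (hα1 : α < 1)
    (ht : 0 < t) :
    (∀ f g : ℝ → ℝ, Differentiable ℝ f → Differentiable ℝ g →
        (∀ᶠ x in nhds t, f x = g x) →
        t ^ ((1 : ℝ) - α) * deriv f t = t ^ ((1 : ℝ) - α) * deriv g t) ∧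
      ∃ f g : ℝ → ℝ, Differentiable ℝ f ∧ Differentiable ℝ g ∧
        (∀ᶠ x in nhds t, f x = g x) ∧
        (1 / Real.Gamma (1 - α)) * (∫ x in (0:ℝ)..t, deriv f x * (t - x) ^ (-α)) ≠
          (1 / Real.Gamma (1 - α)) * (∫ x in (0:ℝ)..t, deriv g x * (t - x) ^ (-α)) :=
  ⟨fun _ _ _ _ hfg => EventuallyEq.conformableDeriv_eq hfg, exists_eventuallyEq_caputoDeriv_ne hα1 ht⟩

theorem conformable_local_caputo_nonlocal (α t : ℝ) (hα : 0 < α) (hα1 : α < 1)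
    (ht : 0 < t) :
    (∀ f g : ℝ → ℝ, Differentiable ℝ f → Differentiable ℝ g →
        (∀ᶠ x in nhds t, f x = g x) →
        t ^ ((1 : ℝ) - α) * deriv f t = t ^ ((1 : ℝ) - α) * deriv g t) ∧
      ∃ f g : ℝ → ℝ, Differentiable ℝ f ∧ Differentiable ℝ g ∧
        (∀ᶠ x in nhds t, f x = g x) ∧
        (1 / Real.Gamma (1 - α)) * (∫ x in (0:ℝ)..t, deriv f x * (t - x) ^ (-α)) ≠
          (1 / Real.Gamma (1 - α)) * (∫ x in (0:ℝ)..t, deriv g x * (t - x) ^ (-α)) :=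
  conformable_local_caputo_nonlocal_general α t hα1 ht
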